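/- Let A ∈ L(K,H) and let W ∈ L(H) be Krein-selfadjoint and trace class. The following are equivalent: (i) the equation Az = x admits a W-ILSS for every x ∈ H; (ii) A admits an indefinite W-inverse; (iii) ran A is W-nonnegative and there exists X₀ ∈ L(H,K) such that tr_{J_H}((AX₀−I)^# W (AX₀−I)) ≤ tr_{J_H}((AX−I)^# W (AX−I)) for every X ∈ L(H,K). -/

import Mathlib

open ContinuousLinearMap

noncomputable section

variable {H K : Type*} [NormedAddCommGroup H] [InnerProductSpace ℂ H] [CompleteSpace H]
  [NormedAddCommGroup K] [InnerProductSpace ℂ K] [CompleteSpace K]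

/-- The Krein adjoint `A^# = J_K ∘ A* ∘ J_H` of an operator `A : K →L[ℂ] H` between
Krein spaces with signature operators `JK` and `JH`. -/
def kreinAdjoint (JK : K →L[ℂ] K) (JH : H →L[ℂ] H) (A : K →L[ℂ] H) : H →L[ℂ] K :=
  JK ∘L (ContinuousLinearMap.adjoint A) ∘L JH

/-- `u` is an indefinite weighted least squares solution (W-ILSS) of `A z = x`:
`[W(Au−x),Au−x] ≤ [W(Az−x),Az−x]` for all `z`, where `[x,y] = ⟨J_H x, y⟩`. -/
def IsWILSS (JH : H →L[ℂ] H) (A : K →L[ℂ] H) (W : H →L[ℂ] H) (x : H) (u : K) : Prop :=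
  ∀ z : K,
    (inner ℂ (JH (W (A u - x))) (A u - x) : ℂ).re ≤
      (inner ℂ (JH (W (A z - x))) (A z - x) : ℂ).re

/-- The error operator `(AX − I)^# W (AX − I)`. -/
def errOp (JH : H →L[ℂ] H) (A : K →L[ℂ] H) (W : H →L[ℂ] H) (X : H →L[ℂ] K) :
    H →L[ℂ] H :=
  kreinAdjoint JH JH (A ∘L X - 1) ∘L (W ∘L (A ∘L X - 1))

/-- `S` is a Hilbert–Schmidt operator (w.r.t. the Hilbert basis `b`; this is in fact
independent of the basis). -/
def IsHilbertSchmidt {ι : Type*} (b : HilbertBasis ι ℂ H) (S : H →L[ℂ] H) : Prop :=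
  Summable fun i => ‖S (b i)‖ ^ 2

/-- `S` is trace class: it is the product of two Hilbert–Schmidt operators. -/
def IsTraceClass {ι : Type*} (b : HilbertBasis ι ℂ H) (S : H →L[ℂ] H) : Prop :=
  ∃ S₁ S₂ : H →L[ℂ] H, IsHilbertSchmidt b S₁ ∧ IsHilbertSchmidt b S₂ ∧ S = S₁ ∘L S₂

/-- The `J`-trace `tr_J(S) = tr(J∘S)` of a (trace-class) operator `S`, computed in the
Hilbert basis `b`. -/
def trJ {ι : Type*} (JH : H →L[ℂ] H) (b : HilbertBasis ι ℂ H) (S : H →L[ℂ] H) : ℝ :=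
  ∑' i, (inner ℂ (JH (S (b i))) (b i) : ℂ).re

/-! With `S = J_H W`, which is selfadjoint for the Hilbert inner product, `u` is a W-ILSS of
`Az = x` iff `ran A` is `S`-nonnegative and the normal equation `A* S (A u - x) = 0` holds
(first variation of a quadratic form). For (i) ⇒ (ii), solvability of the normal equations
`A* S A u = A* S x` for every `x` yields a bounded solution operator by Douglas' lemma.
The `J`-trace of the error operator is `∑ᵢ [W (A X bᵢ - bᵢ), A X bᵢ - bᵢ]`, summable because `W`
is trace class. A rank-one perturbation of `X` changes a single term of this sum, so `X₀`
minimizes it iff each `X₀ bᵢ` is a W-ILSS for `bᵢ`; the normal equations then hold on a Hilbert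
basis, hence everywhere. -/

open scoped InnerProductSpace

lemma eq_zero_and_nonneg_of_forall_quadratic_nonneg {a b : ℝ}
    (h : ∀ t : ℝ, 0 ≤ a * (t * t) + b * t) : b = 0 ∧ 0 ≤ a := by
  have hb : b ^ 2 ≤ 0 := by
    simpa [discrim] using discrim_le_zero (K := ℝ) (c := 0) (by simpa using h)
  have hb0 : b = 0 := pow_eq_zero_iff two_ne_zero |>.mp (le_antisymm hb (sq_nonneg b))
  exact ⟨hb0, by simpa [hb0] using h 1⟩

lemma IsSelfAdjoint.mul_of_mul_star_mul_eq {R : Type*} [Monoid R] [StarMul R] {j w : R}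
    (hj : IsSelfAdjoint j) (hj2 : j * j = 1) (hw : j * star w * j = w) :
    IsSelfAdjoint (j * w) := by
  rw [IsSelfAdjoint, star_mul, hj.star_eq]
  conv_rhs => rw [← hw, ← mul_assoc, ← mul_assoc, hj2, one_mul]

lemma HilbertBasis.hasSum_norm_inner_sq {𝕜 E ι : Type*} [RCLike 𝕜] [NormedAddCommGroup E]
    [InnerProductSpace 𝕜 E] (b : HilbertBasis ι 𝕜 E) (x : E) :
    HasSum (fun i => ‖⟪b i, x⟫_𝕜‖ ^ 2) (‖x‖ ^ 2) := by
  simpa [b.repr_apply_apply] using lp.hasSum_norm (p := 2) (by norm_num) (b.repr x)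

/-- Douglas' factorization lemma (existence part). -/
theorem ContinuousLinearMap.exists_comp_eq_of_range_le {𝕜 E F G : Type*} [RCLike 𝕜]
    [NormedAddCommGroup E] [NormedSpace 𝕜 E] [CompleteSpace E]
    [NormedAddCommGroup F] [InnerProductSpace 𝕜 F] [CompleteSpace F]
    [NormedAddCommGroup G] [NormedSpace 𝕜 G]
    (T : F →L[𝕜] G) (B : E →L[𝕜] G) (h : Set.range B ⊆ Set.range T) :
    ∃ X : E →L[𝕜] F, T ∘L X = B := by
  set N := T.kerᗮ
  have hinjOn : ∀ w₁ ∈ N, ∀ w₂ ∈ N, T w₁ = T w₂ → w₁ = w₂ := by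
    intro w₁ h₁ w₂ h₂ hT
    have hmem : w₁ - w₂ ∈ T.ker ⊓ N := ⟨by simp [hT], N.sub_mem h₁ h₂⟩
    rwa [Submodule.inf_orthogonal_eq_bot, Submodule.mem_bot, sub_eq_zero] at hmem
  set TN := (T : F →ₗ[𝕜] G) ∘ₗ N.subtype
  have hTN : Function.Injective TN := fun w₁ w₂ hw =>
    Subtype.ext (hinjOn _ w₁.2 _ w₂.2 hw)
  have hrange : ∀ x, B x ∈ LinearMap.range TN := by
    intro x
    obtain ⟨u, hu⟩ := h ⟨x, rfl⟩
    obtain ⟨k, hk, n, hn, rfl⟩ := T.ker.exists_add_mem_mem_orthogonal u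
    exact ⟨⟨n, hn⟩, by simpa [TN, show T k = 0 from hk] using hu⟩
  let g : E →ₗ[𝕜] F := N.subtype ∘ₗ (LinearEquiv.ofInjective TN hTN).symm.toLinearMap ∘ₗ
    (B : E →ₗ[𝕜] G).codRestrict _ hrange
  have hTg : ∀ x, T (g x) = B x := fun x =>
    congrArg Subtype.val ((LinearEquiv.ofInjective TN hTN).apply_symm_apply ⟨B x, hrange x⟩)
  have hgN : ∀ x, g x ∈ N := fun x => Subtype.property _
  refine ⟨⟨g, g.continuous_of_seq_closed_graph fun u x y hu hgu => ?_⟩, ext hTg⟩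
  have hyN : y ∈ N := T.ker.isClosed_orthogonal.mem_of_tendsto hgu
    (Filter.Eventually.of_forall fun n => hgN (u n))
  have hTy : T y = B x := tendsto_nhds_unique ((T.continuous.tendsto y).comp hgu)
    (by simpa only [Function.comp_def, hTg] using (B.continuous.tendsto x).comp hu)
  exact hinjOn _ hyN _ (hgN x) (by rw [hTy, hTg])

theorem Orthonormal.forall_tsum_le_iff {𝕜 E F ι : Type*} [RCLike 𝕜]
    [NormedAddCommGroup E] [InnerProductSpace 𝕜 E] [NormedAddCommGroup F] [NormedSpace 𝕜 F]
    {v : ι → E} (hv : Orthonormal 𝕜 v) (f : ι → F → ℝ)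
    (hf : ∀ X : E →L[𝕜] F, Summable fun i => f i (X (v i))) (X₀ : E →L[𝕜] F) :
    (∀ X : E →L[𝕜] F, ∑' i, f i (X₀ (v i)) ≤ ∑' i, f i (X (v i))) ↔
      ∀ i z, f i (X₀ (v i)) ≤ f i z := by
  classical
  refine ⟨fun h i z => ?_, fun h X => (hf X₀).tsum_le_tsum (fun i => h i _) (hf X)⟩
  -- a rank-one perturbation of `X₀` that moves only `X₀ (v i)`, to `z`
  set X := X₀ + (innerSL 𝕜 (v i)).smulRight (z - X₀ (v i))
  have hX : (fun j => f j (X (v j))) = Function.update (fun j => f j (X₀ (v j))) i (f i z) := by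
    funext j
    rcases eq_or_ne j i with rfl | hj
    · simp [X, hv.1 j]
    · simp [X, hj, orthonormal_iff_ite.mp hv i j, hj.symm]
  have hsum := ((hf X₀).hasSum.update i (f i z)).tsum_eq
  rw [← hX] at hsum
  linarith [h X]

section QuadraticForm

variable {𝕜 E F : Type*} [RCLike 𝕜]
  [NormedAddCommGroup E] [InnerProductSpace 𝕜 E] [CompleteSpace E]
  [NormedAddCommGroup F] [InnerProductSpace 𝕜 F] [CompleteSpace F]
  {S : E →L[𝕜] E}

lemma IsSelfAdjoint.reApplyInnerSelf_add (hS : IsSelfAdjoint S) (x y : E) :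
    S.reApplyInnerSelf (x + y) =
      S.reApplyInnerSelf x + 2 * RCLike.re ⟪S x, y⟫_𝕜 + S.reApplyInnerSelf y := by
  have hyx : RCLike.re ⟪S y, x⟫_𝕜 = RCLike.re ⟪S x, y⟫_𝕜 := by
    rw [show ⟪S y, x⟫_𝕜 = ⟪y, S x⟫_𝕜 from hS.isSymmetric y x, ← inner_conj_symm, RCLike.conj_re]
  simp only [reApplyInnerSelf_apply, map_add, inner_add_left, inner_add_right]
  linarith

theorem IsSelfAdjoint.forall_reApplyInnerSelf_le_iff (hS : IsSelfAdjoint S)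
    (A : F →L[𝕜] E) (x : E) (u : F) :
    (∀ z, S.reApplyInnerSelf (A u - x) ≤ S.reApplyInnerSelf (A z - x)) ↔
      (∀ v, 0 ≤ S.reApplyInnerSelf (A v)) ∧ adjoint A (S (A u - x)) = 0 := by
  set w := adjoint A (S (A u - x))
  have hexp : ∀ v, S.reApplyInnerSelf (A (u + v) - x) =
      S.reApplyInnerSelf (A u - x) + 2 * RCLike.re ⟪w, v⟫_𝕜 + S.reApplyInnerSelf (A v) := by
    intro v
    rw [map_add, add_sub_right_comm, hS.reApplyInnerSelf_add, adjoint_inner_left]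
  constructor
  · intro hmin
    have hvar : ∀ v, RCLike.re ⟪w, v⟫_𝕜 = 0 ∧ 0 ≤ S.reApplyInnerSelf (A v) := by
      intro v
      have h := eq_zero_and_nonneg_of_forall_quadratic_nonneg
        (a := S.reApplyInnerSelf (A v)) (b := 2 * RCLike.re ⟪w, v⟫_𝕜) fun t => by
          have := hmin (u + (t : 𝕜) • v)
          rw [hexp, map_smul, reApplyInnerSelf_smul, inner_smul_right, RCLike.re_ofReal_mul,
            RCLike.norm_ofReal, sq_abs] at this
          linarith
      exact ⟨by linarith [h.1], h.2⟩
    refine ⟨fun v => (hvar v).2, ?_⟩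
    simpa [inner_self_eq_norm_sq] using (hvar w).1
  · rintro ⟨hpos, hw⟩ z
    have := hexp (z - u)
    rw [add_sub_cancel, hw, inner_zero_left, map_zero] at this
    linarith [hpos (z - u)]

theorem IsSelfAdjoint.exists_clm_forall_reApplyInnerSelf_le (hS : IsSelfAdjoint S) (A : F →L[𝕜] E)
    (h : ∀ x, ∃ u, ∀ z, S.reApplyInnerSelf (A u - x) ≤ S.reApplyInnerSelf (A z - x)) :
    ∃ G : E →L[𝕜] F, ∀ x z, S.reApplyInnerSelf (A (G x) - x) ≤ S.reApplyInnerSelf (A z - x) := by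
  simp_rw [hS.forall_reApplyInnerSelf_le_iff] at h ⊢
  -- the normal equations `A† S A u = A† S x`
  obtain ⟨G, hG⟩ := (adjoint A ∘L S ∘L A).exists_comp_eq_of_range_le (adjoint A ∘L S) <| by
    rintro _ ⟨x, rfl⟩
    obtain ⟨u, -, hu⟩ := h x
    exact ⟨u, by simpa [sub_eq_zero] using hu⟩
  refine ⟨G, fun x => ⟨(h 0).choose_spec.1, ?_⟩⟩
  simpa [sub_eq_zero] using congrArg (· x) hG

theorem IsSelfAdjoint.forall_reApplyInnerSelf_le_of_hilbertBasis (hS : IsSelfAdjoint S)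
    (A : F →L[𝕜] E) {ι : Type*} (b : HilbertBasis ι 𝕜 E) (X : E →L[𝕜] F)
    (hpos : ∀ v, 0 ≤ S.reApplyInnerSelf (A v))
    (h : ∀ i z, S.reApplyInnerSelf (A (X (b i)) - b i) ≤ S.reApplyInnerSelf (A z - b i)) :
    ∀ x z, S.reApplyInnerSelf (A (X x) - x) ≤ S.reApplyInnerSelf (A z - x) := by
  simp_rw [hS.forall_reApplyInnerSelf_le_iff] at h ⊢
  have hM : adjoint A ∘L S ∘L (A ∘L X - 1) = 0 :=
    ext_on (Submodule.dense_iff_topologicalClosure_eq_top.2 b.dense_span) fun _ ⟨i, hi⟩ => by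
      simpa [← hi] using (h i).2
  exact fun x => ⟨hpos, by simpa using congrArg (· x) hM⟩

end QuadraticForm

section HilbertSchmidt

variable {E ι : Type*} [NormedAddCommGroup E] [InnerProductSpace ℂ E] {b : HilbertBasis ι ℂ E}

theorem IsHilbertSchmidt.adjoint [CompleteSpace E] {S : E →L[ℂ] E}
    (hS : IsHilbertSchmidt b S) : IsHilbertSchmidt b (ContinuousLinearMap.adjoint S) := by
  set f : ι × ι → ℝ := fun p => ‖⟪b p.1, S (b p.2)⟫_ℂ‖ ^ 2
  have hf0 : 0 ≤ f := fun p => by positivity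
  have hcol : ∀ j, HasSum (fun i => f (i, j)) (‖S (b j)‖ ^ 2) :=
    fun j => b.hasSum_norm_inner_sq (S (b j))
  have hrow : ∀ i, HasSum (fun j => f (i, j)) (‖ContinuousLinearMap.adjoint S (b i)‖ ^ 2) := by
    intro i
    convert b.hasSum_norm_inner_sq (ContinuousLinearMap.adjoint S (b i)) using 2 with j
    rw [adjoint_inner_right, norm_inner_symm]
  have hswap : Summable fun p : ι × ι => f p.swap := by
    refine (summable_prod_of_nonneg fun p => hf0 p.swap).2 ⟨fun j => (hcol j).summable, ?_⟩
    simp only [Prod.swap_prod_mk, (hcol _).tsum_eq]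
    exact hS
  have hsum : Summable f := by simpa using hswap.prod_symm
  simpa only [IsHilbertSchmidt, fun i => (hrow i).tsum_eq] using
    ((summable_prod_of_nonneg hf0).1 hsum).2

theorem IsHilbertSchmidt.clm_comp {S : E →L[ℂ] E} (hS : IsHilbertSchmidt b S) (C : E →L[ℂ] E) :
    IsHilbertSchmidt b (C ∘L S) := by
  refine (hS.mul_left (‖C‖ ^ 2)).of_nonneg_of_le (fun i => by positivity) fun i => ?_
  rw [← mul_pow]
  exact pow_le_pow_left₀ (norm_nonneg _) (C.le_opNorm _) 2

theorem IsHilbertSchmidt.comp_clm [CompleteSpace E] {S : E →L[ℂ] E} (hS : IsHilbertSchmidt b S)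
    (C : E →L[ℂ] E) : IsHilbertSchmidt b (S ∘L C) := by
  simpa [adjoint_comp] using (hS.adjoint.clm_comp (ContinuousLinearMap.adjoint C)).adjoint

theorem IsHilbertSchmidt.summable_re_inner {P Q : E →L[ℂ] E} (hP : IsHilbertSchmidt b P)
    (hQ : IsHilbertSchmidt b Q) : Summable fun i => RCLike.re ⟪P (b i), Q (b i)⟫_ℂ := by
  refine Summable.of_norm_bounded ((hP.add hQ).div_const 2) fun i => ?_
  calc ‖RCLike.re ⟪P (b i), Q (b i)⟫_ℂ‖ ≤ ‖P (b i)‖ * ‖Q (b i)‖ :=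
        (RCLike.norm_re_le_norm _).trans (norm_inner_le_norm _ _)
    _ ≤ (‖P (b i)‖ ^ 2 + ‖Q (b i)‖ ^ 2) / 2 := by
        nlinarith [sq_nonneg (‖P (b i)‖ - ‖Q (b i)‖)]

theorem IsTraceClass.summable_reApplyInnerSelf [CompleteSpace E] {W : E →L[ℂ] E}
    (hW : IsTraceClass b W) (C D : E →L[ℂ] E) :
    Summable fun i => (C ∘L W).reApplyInnerSelf (D (b i)) := by
  obtain ⟨S₁, S₂, hS₁, hS₂, rfl⟩ := hW
  simpa [reApplyInnerSelf_apply, ← adjoint_inner_right] using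
    (hS₂.comp_clm D).summable_re_inner ((hS₁.clm_comp C).adjoint.comp_clm D)

end HilbertSchmidt

theorem trJ_errOp {E F ι : Type*} [NormedAddCommGroup E] [InnerProductSpace ℂ E]
    [CompleteSpace E] [NormedAddCommGroup F] [InnerProductSpace ℂ F]
    {JH : E →L[ℂ] E} (hJH2 : JH ∘L JH = 1) (b : HilbertBasis ι ℂ E) (A : F →L[ℂ] E) (W : E →L[ℂ] E) (X : E →L[ℂ] F) :
    trJ JH b (errOp JH A W X) = ∑' i, (JH ∘L W).reApplyInnerSelf (A (X (b i)) - b i) := by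
  have hJJ : ∀ y, JH (JH y) = y := fun y => by simpa using congrArg (· y) hJH2
  simp only [trJ, errOp, kreinAdjoint, comp_apply, hJJ, adjoint_inner_left, reApplyInnerSelf_apply,
    sub_apply]
  rfl

theorem stmt8_general {ι : Type*}
    (JH : H →L[ℂ] H) (hJHsa : IsSelfAdjoint JH) (hJH2 : JH ∘L JH = 1)
    (b : HilbertBasis ι ℂ H)
    (A : K →L[ℂ] H) (W : H →L[ℂ] H)
    (hW : JH ∘L (ContinuousLinearMap.adjoint W) ∘L JH = W)
    (hWtc : IsTraceClass b W) :
    List.TFAE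
      [ -- (i)
        ∀ x : H, ∃ u : K, IsWILSS JH A W x u,
        -- (ii)
        ∃ G : H →L[ℂ] K, ∀ x : H, IsWILSS JH A W x (G x),
        -- (iii)
        (∀ z : K, 0 ≤ (inner ℂ (JH (W (A z))) (A z) : ℂ).re) ∧
          ∃ X₀ : H →L[ℂ] K, ∀ X : H →L[ℂ] K,
            trJ JH b (errOp JH A W X₀) ≤ trJ JH b (errOp JH A W X) ] := by
  -- `IsWILSS JH A W x u` unfolds to `∀ z, (JH ∘L W).reApplyInnerSelf (A u - x) ≤ …`
  have hS : IsSelfAdjoint (JH ∘L W) :=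
    hJHsa.mul_of_mul_star_mul_eq hJH2 (by rwa [mul_assoc, star_eq_adjoint])
  have htrace := b.orthonormal.forall_tsum_le_iff
    (fun i z => (JH ∘L W).reApplyInnerSelf (A z - b i))
    fun X => by simpa using hWtc.summable_reApplyInnerSelf JH (A ∘L X - 1)
  simp_rw [trJ_errOp hJH2]
  tfae_have 1 → 2 := hS.exists_clm_forall_reApplyInnerSelf_le A
  tfae_have 2 → 1 := fun ⟨G, hG⟩ x => ⟨G x, hG x⟩
  tfae_have 2 → 3
  | ⟨G, hG⟩ => ⟨((hS.forall_reApplyInnerSelf_le_iff A 0 (G 0)).1 (hG 0)).1, G,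
      (htrace G).2 fun i => hG (b i)⟩
  tfae_have 3 → 2
  | ⟨hpos, X₀, hX₀⟩ =>
      ⟨X₀, hS.forall_reApplyInnerSelf_le_of_hilbertBasis A b X₀ hpos ((htrace X₀).1 hX₀)⟩
  tfae_finish

/-- for trace-class Krein-selfadjoint `W`, the following are equivalent:
(i) `Az = x` admits a W-ILSS for every `x`; (ii) `A` admits an indefinite `W`-inverse;
(iii) `ran A` is `W`-nonnegative and the `J`-trace functional
`X ↦ tr_J((AX−I)^# W (AX−I))` attains a minimum. -/
theorem stmt8 {ι : Type*}
    [TopologicalSpace.SeparableSpace H] [TopologicalSpace.SeparableSpace K]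
    (JH : H →L[ℂ] H) (hJHsa : IsSelfAdjoint JH) (hJH2 : JH ∘L JH = 1)
    (JK : K →L[ℂ] K) (hJKsa : IsSelfAdjoint JK) (hJK2 : JK ∘L JK = 1)
    (b : HilbertBasis ι ℂ H)
    (A : K →L[ℂ] H) (W : H →L[ℂ] H)
    (hW : JH ∘L (ContinuousLinearMap.adjoint W) ∘L JH = W)
    (hWtc : IsTraceClass b W) :
    List.TFAE
      [ -- (i)
        ∀ x : H, ∃ u : K, IsWILSS JH A W x u,
        -- (ii)
        ∃ G : H →L[ℂ] K, ∀ x : H, IsWILSS JH A W x (G x),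
        -- (iii)
        (∀ z : K, 0 ≤ (inner ℂ (JH (W (A z))) (A z) : ℂ).re) ∧
          ∃ X₀ : H →L[ℂ] K, ∀ X : H →L[ℂ] K,
            trJ JH b (errOp JH A W X₀) ≤ trJ JH b (errOp JH A W X) ] :=
  stmt8_general JH hJHsa hJH2 b A W hW hWtc
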